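/- arXiv:1310.2202 — 2 statements merged into one kernel-verified Lean document; each statement's English description precedes it below -/
import Mathlib

section
/- For the system E5 with H = ∂ₓ² + ∂_y² + a x, L₁ = ∂ₓ∂_y + (a/2)y, L₂ = (1/2){M, X} − (a/4)y² where M = x∂_y − y∂ₓ and X = ∂_y, the structure equations hold: [L₁,L₂] = 2X³ − HX, [L₁,X] = −a/2, [L₂,X] = L₁. -/
noncomputable section

/-- Partial derivative in `x`. -/
def dx (f : ℝ × ℝ → ℂ) : ℝ × ℝ → ℂ := fun p => fderiv ℝ f p (1, 0)

/-- Partial derivative in `y`. -/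
def dy (f : ℝ × ℝ → ℂ) : ℝ × ℝ → ℂ := fun p => fderiv ℝ f p (0, 1)

/-- `M = x∂_y − y∂ₓ`. -/
def Mop (f : ℝ × ℝ → ℂ) : ℝ × ℝ → ℂ :=
  fun p => (p.1 : ℂ) * dy f p - (p.2 : ℂ) * dx f p

/-- `H = ∂ₓ² + ∂_y² + a x`. -/
def Hop (a : ℂ) (f : ℝ × ℝ → ℂ) : ℝ × ℝ → ℂ :=
  fun p => dx (dx f) p + dy (dy f) p + a * (p.1 : ℂ) * f p

/-- `L₁ = ∂ₓ∂_y + (a/2) y`. -/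
def L1 (a : ℂ) (f : ℝ × ℝ → ℂ) : ℝ × ℝ → ℂ :=
  fun p => dx (dy f) p + (a / 2) * (p.2 : ℂ) * f p

/-- `L₂ = (1/2){M, X} − (a/4) y²` with `X = ∂_y`. -/
def L2 (a : ℂ) (f : ℝ × ℝ → ℂ) : ℝ × ℝ → ℂ :=
  fun p => (1 / 2 : ℂ) * (Mop (dy f) p + dy (Mop f) p) - (a / 4) * (p.2 : ℂ) ^ 2 * f p

namespace Stmt6Aux

@[fun_prop] lemma contDiff_coe1 : ContDiff ℝ (⊤ : ℕ∞) (fun p : ℝ × ℝ => (p.1 : ℂ)) :=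
  Complex.ofRealCLM.contDiff.comp contDiff_fst

@[fun_prop] lemma contDiff_coe2 : ContDiff ℝ (⊤ : ℕ∞) (fun p : ℝ × ℝ => (p.2 : ℂ)) :=
  Complex.ofRealCLM.contDiff.comp contDiff_snd

@[fun_prop] lemma contDiff_dx {f : ℝ × ℝ → ℂ} (hf : ContDiff ℝ (⊤ : ℕ∞) f) : ContDiff ℝ (⊤ : ℕ∞) (dx f) :=
  (hf.fderiv_right (by simp)).clm_apply contDiff_const

@[fun_prop] lemma contDiff_dy {f : ℝ × ℝ → ℂ} (hf : ContDiff ℝ (⊤ : ℕ∞) f) : ContDiff ℝ (⊤ : ℕ∞) (dy f) :=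
  (hf.fderiv_right (by simp)).clm_apply contDiff_const

variable {g h : ℝ × ℝ → ℂ} {c : ℂ}

lemma diffAt (hg : ContDiff ℝ (⊤ : ℕ∞) g) (p : ℝ × ℝ) : DifferentiableAt ℝ g p :=
  (hg.differentiable (by simp)).differentiableAt

lemma hasFDerivAt_coe1 (p : ℝ × ℝ) :
    HasFDerivAt (fun p : ℝ × ℝ => (p.1 : ℂ))
      (Complex.ofRealCLM.comp (ContinuousLinearMap.fst ℝ ℝ ℝ)) p :=
  (Complex.ofRealCLM.comp (ContinuousLinearMap.fst ℝ ℝ ℝ)).hasFDerivAt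

lemma hasFDerivAt_coe2 (p : ℝ × ℝ) :
    HasFDerivAt (fun p : ℝ × ℝ => (p.2 : ℂ))
      (Complex.ofRealCLM.comp (ContinuousLinearMap.snd ℝ ℝ ℝ)) p :=
  (Complex.ofRealCLM.comp (ContinuousLinearMap.snd ℝ ℝ ℝ)).hasFDerivAt

lemma fderiv_coe1 (p v) : fderiv ℝ (fun p : ℝ × ℝ => (p.1 : ℂ)) p v = (v.1 : ℂ) := by
  rw [(hasFDerivAt_coe1 p).fderiv]; simp

lemma fderiv_coe2 (p v) : fderiv ℝ (fun p : ℝ × ℝ => (p.2 : ℂ)) p v = (v.2 : ℂ) := by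
  rw [(hasFDerivAt_coe2 p).fderiv]; simp

-- additive lemmas
lemma dx_add (hg : ContDiff ℝ (⊤ : ℕ∞) g) (hh : ContDiff ℝ (⊤ : ℕ∞) h) :
    dx (fun p => g p + h p) = fun p => dx g p + dx h p := by
  funext p; simp [dx, fderiv_fun_add (diffAt hg p) (diffAt hh p)]

lemma dy_add (hg : ContDiff ℝ (⊤ : ℕ∞) g) (hh : ContDiff ℝ (⊤ : ℕ∞) h) :
    dy (fun p => g p + h p) = fun p => dy g p + dy h p := by
  funext p; simp [dy, fderiv_fun_add (diffAt hg p) (diffAt hh p)]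

lemma dx_sub (hg : ContDiff ℝ (⊤ : ℕ∞) g) (hh : ContDiff ℝ (⊤ : ℕ∞) h) :
    dx (fun p => g p - h p) = fun p => dx g p - dx h p := by
  funext p; simp [dx, fderiv_fun_sub (diffAt hg p) (diffAt hh p)]

lemma dy_sub (hg : ContDiff ℝ (⊤ : ℕ∞) g) (hh : ContDiff ℝ (⊤ : ℕ∞) h) :
    dy (fun p => g p - h p) = fun p => dy g p - dy h p := by
  funext p; simp [dy, fderiv_fun_sub (diffAt hg p) (diffAt hh p)]

lemma dx_const_mul (hg : ContDiff ℝ (⊤ : ℕ∞) g) (c : ℂ) :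
    dx (fun p => c * g p) = fun p => c * dx g p := by
  funext p; simp [dx, fderiv_const_mul (diffAt hg p) c]

lemma dy_const_mul (hg : ContDiff ℝ (⊤ : ℕ∞) g) (c : ℂ) :
    dy (fun p => c * g p) = fun p => c * dy g p := by
  funext p; simp [dy, fderiv_const_mul (diffAt hg p) c]

lemma dx_x_mul (hg : ContDiff ℝ (⊤ : ℕ∞) g) :
    dx (fun p => (p.1 : ℂ) * g p) = fun p => g p + (p.1 : ℂ) * dx g p := by
  funext p
  simp only [dx, fderiv_fun_mul (diffAt contDiff_coe1 p) (diffAt hg p),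
    ContinuousLinearMap.add_apply, ContinuousLinearMap.smul_apply, fderiv_coe1]
  simp [smul_eq_mul]; ring

lemma dy_x_mul (hg : ContDiff ℝ (⊤ : ℕ∞) g) :
    dy (fun p => (p.1 : ℂ) * g p) = fun p => (p.1 : ℂ) * dy g p := by
  funext p
  simp only [dy, fderiv_fun_mul (diffAt contDiff_coe1 p) (diffAt hg p),
    ContinuousLinearMap.add_apply, ContinuousLinearMap.smul_apply, fderiv_coe1]
  simp [smul_eq_mul]

lemma dx_y_mul (hg : ContDiff ℝ (⊤ : ℕ∞) g) :
    dx (fun p => (p.2 : ℂ) * g p) = fun p => (p.2 : ℂ) * dx g p := by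
  funext p
  simp only [dx, fderiv_fun_mul (diffAt contDiff_coe2 p) (diffAt hg p),
    ContinuousLinearMap.add_apply, ContinuousLinearMap.smul_apply, fderiv_coe2]
  simp [smul_eq_mul]

lemma dy_y_mul (hg : ContDiff ℝ (⊤ : ℕ∞) g) :
    dy (fun p => (p.2 : ℂ) * g p) = fun p => g p + (p.2 : ℂ) * dy g p := by
  funext p
  simp only [dy, fderiv_fun_mul (diffAt contDiff_coe2 p) (diffAt hg p),
    ContinuousLinearMap.add_apply, ContinuousLinearMap.smul_apply, fderiv_coe2]
  simp [smul_eq_mul]; ring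

lemma dx_cy_mul (hg : ContDiff ℝ (⊤ : ℕ∞) g) (c : ℂ) :
    dx (fun p => c * (p.2 : ℂ) * g p) = fun p => c * (p.2 : ℂ) * dx g p := by
  have e : (fun p : ℝ × ℝ => c * (p.2 : ℂ) * g p) = fun p => c * ((p.2 : ℂ) * g p) := by
    funext p; ring
  rw [e, dx_const_mul (by fun_prop), dx_y_mul hg]; funext p; ring

lemma dy_cy_mul (hg : ContDiff ℝ (⊤ : ℕ∞) g) (c : ℂ) :
    dy (fun p => c * (p.2 : ℂ) * g p) = fun p => c * g p + c * (p.2 : ℂ) * dy g p := by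
  have e : (fun p : ℝ × ℝ => c * (p.2 : ℂ) * g p) = fun p => c * ((p.2 : ℂ) * g p) := by
    funext p; ring
  rw [e, dy_const_mul (by fun_prop), dy_y_mul hg]; funext p; ring

lemma dx_cy2_mul (hg : ContDiff ℝ (⊤ : ℕ∞) g) (c : ℂ) :
    dx (fun p => c * (p.2 : ℂ) ^ 2 * g p) = fun p => c * (p.2 : ℂ) ^ 2 * dx g p := by
  have e : (fun p : ℝ × ℝ => c * (p.2 : ℂ) ^ 2 * g p)
      = fun p => c * ((p.2 : ℂ) * ((p.2 : ℂ) * g p)) := by funext p; ring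
  rw [e, dx_const_mul (by fun_prop), dx_y_mul (by fun_prop), dx_y_mul hg]
  funext p; ring

lemma dy_cy2_mul (hg : ContDiff ℝ (⊤ : ℕ∞) g) (c : ℂ) :
    dy (fun p => c * (p.2 : ℂ) ^ 2 * g p)
      = fun p => 2 * c * (p.2 : ℂ) * g p + c * (p.2 : ℂ) ^ 2 * dy g p := by
  have e : (fun p : ℝ × ℝ => c * (p.2 : ℂ) ^ 2 * g p)
      = fun p => c * ((p.2 : ℂ) * ((p.2 : ℂ) * g p)) := by funext p; ring
  rw [e, dy_const_mul (by fun_prop), dy_y_mul (by fun_prop), dy_y_mul hg]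
  funext p; ring

-- Clairaut
lemma dy_dx (hg : ContDiff ℝ (⊤ : ℕ∞) g) : dy (dx g) = dx (dy g) := by
  funext p
  have hd : DifferentiableAt ℝ (fderiv ℝ g) p :=
    ((hg.fderiv_right (m := (⊤ : ℕ∞)) (by simp)).differentiable (by simp)).differentiableAt
  have h1 : dy (dx g) p = fderiv ℝ (fderiv ℝ g) p (0, 1) (1, 0) := by
    show fderiv ℝ (fun q => fderiv ℝ g q (1, 0)) p (0, 1) = _
    rw [fderiv_clm_apply hd (differentiableAt_const _)]
    simp
  have h2 : dx (dy g) p = fderiv ℝ (fderiv ℝ g) p (1, 0) (0, 1) := by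
    show fderiv ℝ (fun q => fderiv ℝ g q (0, 1)) p (1, 0) = _
    rw [fderiv_clm_apply hd (differentiableAt_const _)]
    simp
  rw [h1, h2, (hg.contDiffAt.isSymmSndFDerivAt (by rw [minSmoothness_of_isRCLikeNormedField]; exact WithTop.coe_le_coe.2 le_top)).eq]

end Stmt6Aux

open Stmt6Aux

lemma Mop_def (f : ℝ × ℝ → ℂ) :
    Mop f = fun p => (p.1 : ℂ) * dy f p - (p.2 : ℂ) * dx f p := rfl
lemma L1_def (a : ℂ) (f : ℝ × ℝ → ℂ) :
    L1 a f = fun p => dx (dy f) p + (a / 2) * (p.2 : ℂ) * f p := rfl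
lemma L2_def (a : ℂ) (f : ℝ × ℝ → ℂ) :
    L2 a f = fun p => (1 / 2 : ℂ) * (Mop (dy f) p + dy (Mop f) p)
      - (a / 4) * (p.2 : ℂ) ^ 2 * f p := rfl


/-- E5 structure equations: `[L₁,L₂] = 2X³ − HX`, `[L₁,X] = −a/2`,
`[L₂,X] = L₁` on smooth functions, with `X = ∂_y`. -/
theorem stmt6 (a : ℂ) (f : ℝ × ℝ → ℂ) (hf : ContDiff ℝ (⊤ : ℕ∞) f) :
    (∀ p, L1 a (L2 a f) p - L2 a (L1 a f) p = 2 * dy (dy (dy f)) p - Hop a (dy f) p) ∧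
    (∀ p, L1 a (dy f) p - dy (L1 a f) p = -(a / 2) * f p) ∧
    (∀ p, L2 a (dy f) p - dy (L2 a f) p = L1 a f p) := by
  refine ⟨fun p => ?_, fun p => ?_, fun p => ?_⟩ <;>
  · simp (disch := fun_prop) only [L1_def, L2_def, Hop, Mop_def, dx_add, dy_add, dx_sub, dy_sub,
      dx_const_mul, dy_const_mul, dx_x_mul, dy_x_mul, dx_y_mul, dy_y_mul,
      dx_cy_mul, dy_cy_mul, dx_cy2_mul, dy_cy2_mul, dy_dx]
    ring
end
end

section
/- For the system E5 (H = ∂ₓ² + ∂_y² + ax, L₁ = ∂ₓ∂_y + (a/2)y, L₂ = (1/2){x∂_y − y∂ₓ, ∂_y} − (a/4)y², X = ∂_y), the fourth-order operator identity X⁴ − HX² + L₁² + aL₂ = 0 holds. -/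
noncomputable section

/- ### Auxiliary lemmas -/

lemma smooth_pd (f : ℝ × ℝ → ℂ) (hf : ContDiff ℝ (⊤ : ℕ∞) f) (v : ℝ × ℝ) :
    ContDiff ℝ (⊤ : ℕ∞) (fun p => fderiv ℝ f p v) :=
  (hf.fderiv_right (by simp)).clm_apply contDiff_const

lemma smooth_dx {f : ℝ × ℝ → ℂ} (hf : ContDiff ℝ (⊤ : ℕ∞) f) : ContDiff ℝ (⊤ : ℕ∞) (dx f) :=
  smooth_pd f hf (1, 0)

lemma smooth_dy {f : ℝ × ℝ → ℂ} (hf : ContDiff ℝ (⊤ : ℕ∞) f) : ContDiff ℝ (⊤ : ℕ∞) (dy f) :=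
  smooth_pd f hf (0, 1)

lemma pd_add (v : ℝ × ℝ) {f g : ℝ × ℝ → ℂ} {p : ℝ × ℝ}
    (hf : DifferentiableAt ℝ f p) (hg : DifferentiableAt ℝ g p) :
    fderiv ℝ (fun q => f q + g q) p v = fderiv ℝ f p v + fderiv ℝ g p v := by
  rw [fderiv_fun_add hf hg]; rfl

lemma pd_sub (v : ℝ × ℝ) {f g : ℝ × ℝ → ℂ} {p : ℝ × ℝ}
    (hf : DifferentiableAt ℝ f p) (hg : DifferentiableAt ℝ g p) :
    fderiv ℝ (fun q => f q - g q) p v = fderiv ℝ f p v - fderiv ℝ g p v := by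
  rw [fderiv_fun_sub hf hg]; rfl

lemma pd_mul (v : ℝ × ℝ) {f g : ℝ × ℝ → ℂ} {p : ℝ × ℝ}
    (hf : DifferentiableAt ℝ f p) (hg : DifferentiableAt ℝ g p) :
    fderiv ℝ (fun q => f q * g q) p v = fderiv ℝ f p v * g p + f p * fderiv ℝ g p v := by
  rw [fderiv_fun_mul hf hg]; simp; ring

lemma pd_const_mul (v : ℝ × ℝ) (c : ℂ) {f : ℝ × ℝ → ℂ} {p : ℝ × ℝ}
    (hf : DifferentiableAt ℝ f p) :
    fderiv ℝ (fun q => c * f q) p v = c * fderiv ℝ f p v := by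
  rw [fderiv_const_mul hf c]; rfl

lemma pd_Xc (p v : ℝ × ℝ) : fderiv ℝ (fun q : ℝ × ℝ => ((q.1 : ℝ) : ℂ)) p v = (v.1 : ℂ) := by
  have : (fun q : ℝ × ℝ => ((q.1 : ℝ) : ℂ))
      = ⇑(Complex.ofRealCLM.comp (ContinuousLinearMap.fst ℝ ℝ ℝ)) := rfl
  rw [this, ContinuousLinearMap.fderiv]; rfl

lemma pd_Yc (p v : ℝ × ℝ) : fderiv ℝ (fun q : ℝ × ℝ => ((q.2 : ℝ) : ℂ)) p v = (v.2 : ℂ) := by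
  have : (fun q : ℝ × ℝ => ((q.2 : ℝ) : ℂ))
      = ⇑(Complex.ofRealCLM.comp (ContinuousLinearMap.snd ℝ ℝ ℝ)) := rfl
  rw [this, ContinuousLinearMap.fderiv]; rfl

lemma smooth_Xc : ContDiff ℝ (⊤ : ℕ∞) (fun q : ℝ × ℝ => ((q.1 : ℝ) : ℂ)) :=
  (Complex.ofRealCLM.comp (ContinuousLinearMap.fst ℝ ℝ ℝ)).contDiff

lemma smooth_Yc : ContDiff ℝ (⊤ : ℕ∞) (fun q : ℝ × ℝ => ((q.2 : ℝ) : ℂ)) :=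
  (Complex.ofRealCLM.comp (ContinuousLinearMap.snd ℝ ℝ ℝ)).contDiff

lemma second_pd (f : ℝ × ℝ → ℂ) (hf : ContDiff ℝ (⊤ : ℕ∞) f) (p v w : ℝ × ℝ) :
    fderiv ℝ (fun q => fderiv ℝ f q v) p w = fderiv ℝ (fderiv ℝ f) p w v := by
  have hc : DifferentiableAt ℝ (fderiv ℝ f) p :=
    ((hf.fderiv_right (m := (⊤ : ℕ∞)) (by simp)).differentiable (by simp)) p
  rw [fderiv_clm_apply hc (differentiableAt_const v)]
  simp

lemma clairaut {f : ℝ × ℝ → ℂ} (hf : ContDiff ℝ (⊤ : ℕ∞) f) : dx (dy f) = dy (dx f) := by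
  funext p
  have h : IsSymmSndFDerivAt ℝ f p :=
    (hf.contDiffAt).isSymmSndFDerivAt (n := (⊤ : ℕ∞)) (by rw [minSmoothness_of_isRCLikeNormedField]; exact WithTop.coe_le_coe.mpr le_top)
  show fderiv ℝ (fun q => fderiv ℝ f q (0,1)) p (1,0)
      = fderiv ℝ (fun q => fderiv ℝ f q (1,0)) p (0,1)
  rw [second_pd f hf, second_pd f hf, h]

/-- E5 fourth-order identity: `X⁴ − HX² + L₁² + aL₂ = 0`
as an operator identity on smooth functions, with `X = ∂_y`. -/
theorem stmt7 (a : ℂ) (f : ℝ × ℝ → ℂ) (hf : ContDiff ℝ (⊤ : ℕ∞) f) :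
    ∀ p, dy (dy (dy (dy f))) p - Hop a (dy (dy f)) p + L1 a (L1 a f) p
      + a * L2 a f p = 0 := by
  intro p
  have hfy : ContDiff ℝ (⊤ : ℕ∞) (dy f) := smooth_dy hf
  have hfyy : ContDiff ℝ (⊤ : ℕ∞) (dy (dy f)) := smooth_dy hfy
  have hfxy : ContDiff ℝ (⊤ : ℕ∞) (dx (dy f)) := smooth_dx hfy
  have hfxyy : ContDiff ℝ (⊤ : ℕ∞) (dx (dy (dy f))) := smooth_dx hfyy
  -- dy (L1 a f) as an explicit function
  have E1 : dy (L1 a f)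
      = fun q => dx (dy (dy f)) q + (a / 2) * (f q + ((q.2 : ℝ) : ℂ) * dy f q) := by
    funext q
    show fderiv ℝ (fun r => dx (dy f) r + (a / 2) * ((r.2 : ℝ) : ℂ) * f r) q (0, 1) = _
    rw [pd_add (0,1) (hfxy.differentiable (by simp) q)
        (((contDiff_const.mul smooth_Yc).mul hf).differentiable (by simp) q),
      pd_mul (0,1) ((contDiff_const.mul smooth_Yc).differentiable (by simp) q)
        (hf.differentiable (by simp) q),
      pd_const_mul (0,1) (a/2) (smooth_Yc.differentiable (by simp) q), pd_Yc]
    have hcl : dx (dy (dy f)) = dy (dx (dy f)) := clairaut hfy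
    rw [hcl]
    show dy (dx (dy f)) q + (a / 2 * 1 * f q + a / 2 * ↑q.2 * dy f q) = _
    ring
  have E2 : dx (dy (L1 a f)) p
      = dx (dx (dy (dy f))) p + (a / 2) * (dx f p + ((p.2 : ℝ) : ℂ) * dx (dy f) p) := by
    show fderiv ℝ (dy (L1 a f)) p (1, 0) = _
    rw [E1, pd_add (1,0) (hfxyy.differentiable (by simp) p)
        ((contDiff_const.mul (hf.add (smooth_Yc.mul hfy))).differentiable (by simp) p),
      pd_const_mul (1,0) (a/2) ((hf.add (smooth_Yc.mul hfy)).differentiable (by simp) p),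
      pd_add (1,0) (hf.differentiable (by simp) p) ((smooth_Yc.mul hfy).differentiable (by simp) p),
      pd_mul (1,0) (smooth_Yc.differentiable (by simp) p) (hfy.differentiable (by simp) p), pd_Yc]
    show dx (dx (dy (dy f))) p + a / 2 * (dx f p + ((0:ℝ) * dy f p + ↑p.2 * dx (dy f) p)) = _
    push_cast
    ring
  have hL1L1 : L1 a (L1 a f) p
      = dx (dx (dy (dy f))) p + (a / 2) * (dx f p + ((p.2 : ℝ) : ℂ) * dx (dy f) p)
        + (a / 2) * (p.2 : ℂ) * (dx (dy f) p + (a / 2) * (p.2 : ℂ) * f p) := by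
    show dx (dy (L1 a f)) p + (a / 2) * (p.2 : ℂ) * (L1 a f p) = _
    rw [E2]; rfl
  have hMop2 : dy (Mop f) p
      = (p.1 : ℂ) * dy (dy f) p - (dx f p + ((p.2 : ℝ) : ℂ) * dx (dy f) p) := by
    show fderiv ℝ (fun q => ((q.1 : ℝ) : ℂ) * dy f q - ((q.2 : ℝ) : ℂ) * dx f q) p (0, 1) = _
    rw [pd_sub (0,1) ((smooth_Xc.mul hfy).differentiable (by simp) p)
        ((smooth_Yc.mul (smooth_dx hf)).differentiable (by simp) p),
      pd_mul (0,1) (smooth_Xc.differentiable (by simp) p) (hfy.differentiable (by simp) p),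
      pd_mul (0,1) (smooth_Yc.differentiable (by simp) p) ((smooth_dx hf).differentiable (by simp) p),
      pd_Xc, pd_Yc]
    have hcl : dx (dy f) = dy (dx f) := clairaut hf
    have h1 : fderiv ℝ (dx f) p (0, 1) = dx (dy f) p := (congrFun hcl p).symm
    have h2 : fderiv ℝ (dy f) p (0, 1) = dy (dy f) p := rfl
    rw [h1, h2]
    norm_num
  have hMop1 : Mop (dy f) p = (p.1 : ℂ) * dy (dy f) p - (p.2 : ℂ) * dx (dy f) p := rfl
  have hHop : Hop a (dy (dy f)) p
      = dx (dx (dy (dy f))) p + dy (dy (dy (dy f))) p + a * (p.1 : ℂ) * dy (dy f) p := rfl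
  have hL2 : L2 a f p
      = (1 / 2 : ℂ) * (Mop (dy f) p + dy (Mop f) p) - (a / 4) * (p.2 : ℂ) ^ 2 * f p := rfl
  rw [hHop, hL1L1, hL2, hMop1, hMop2]
  ring
end
end
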